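/- Let $n,k\in\mathbb{N}$ and $c>0$. There exists $c_3=c_3(n,c,k)>0$ such that for all $0<a<b\le ka$ and all $t>0$: $\int_0^t s^{-n/2}\int_{\{y\in\mathbb{R}^n : a<|y|<b\}}\exp(-c|y|^2/s)\,dy\,ds \le c_3\, t\, \exp(-c a^2/(2t))$. -/

import Mathlib

/-!
On the annulus `|y| > a`, so the inner integral is at most `exp (-c a² / s)` times the volume
of the annulus, which is at most `(k a)ⁿ |B₁|`. With `u = a² / s`, the outer integrand is then
bounded by `kⁿ |B₁| · u^(n/2) exp (-c u / 2) · exp (-c a² / (2 s))`; the middle factor is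
bounded uniformly in `u` (its maximum is `(n / c)^(n/2) e^(-n/2)`), and the last is at most
`exp (-c a² / (2 t))` for `s ≤ t`. Integrating this constant over `(0, t)` gives the factor `t`.
-/

open MeasureTheory Real Metric Module

lemma rpow_mul_exp_neg_mul_le {p b x : ℝ} (hp : 0 ≤ p) (hb : 0 < b) (hx : 0 ≤ x) :
    x ^ p * exp (-(b * x)) ≤ (p / b) ^ p * exp (-p) := by
  rcases hp.eq_or_lt with rfl | hp
  · simp only [rpow_zero, one_mul, neg_zero, exp_zero, exp_le_one_iff, neg_nonpos]
    positivity
  rcases hx.eq_or_lt with rfl | hx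
  · rw [zero_rpow hp.ne', zero_mul]
    positivity
  have hpb : 0 < p / b := div_pos hp hb
  -- `log z ≤ z - 1` at `z = x / (p / b)`, multiplied by `p`
  have hlog := log_le_sub_one_of_pos (div_pos hx hpb)
  rw [log_div hx.ne' hpb.ne', div_div_eq_mul_div] at hlog
  have hlog' : p * log x - b * x ≤ p * log (p / b) - p := by
    have := mul_le_mul_of_nonneg_left hlog hp.le
    rw [mul_sub, mul_sub, mul_div_cancel₀ _ hp.ne', mul_one, mul_comm x b] at this
    linarith
  rw [rpow_def_of_pos hx, rpow_def_of_pos hpb, ← exp_add, ← exp_add, exp_le_exp]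
  linarith

lemma rpow_neg_mul_pow_mul_exp_le (n : ℕ) {a c s t : ℝ} (hc : 0 < c) (ha : 0 ≤ a) (hs : 0 < s)
    (hst : s ≤ t) :
    s ^ (-(n : ℝ) / 2) * a ^ n * exp (-c * a ^ 2 / s) ≤
      ((n : ℝ) / c) ^ ((n : ℝ) / 2) * exp (-((n : ℝ) / 2)) * exp (-c * a ^ 2 / (2 * t)) := by
  have hpow : s ^ (-(n : ℝ) / 2) * a ^ n = (a ^ 2 / s) ^ ((n : ℝ) / 2) := by
    rw [div_rpow (by positivity) hs.le, ← rpow_natCast a 2, ← rpow_mul ha, Nat.cast_ofNat,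
      mul_div_cancel₀ _ two_ne_zero, rpow_natCast, neg_div, rpow_neg hs.le]
    ring
  have hsplit : exp (-c * a ^ 2 / s) =
      exp (-(c / 2 * (a ^ 2 / s))) * exp (-c * a ^ 2 / (2 * s)) := by
    rw [← exp_add]
    ring_nf
  have hbump := rpow_mul_exp_neg_mul_le (p := (n : ℝ) / 2) (by positivity) (half_pos hc)
    (x := a ^ 2 / s) (by positivity)
  rw [div_div_div_cancel_right₀ two_ne_zero] at hbump
  have hmono : exp (-c * a ^ 2 / (2 * s)) ≤ exp (-c * a ^ 2 / (2 * t)) := by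
    rw [exp_le_exp, neg_mul, neg_div, neg_div, neg_le_neg_iff]
    gcongr
  rw [hsplit, ← mul_assoc, hpow]
  exact mul_le_mul hbump hmono (exp_pos _).le (by positivity)

lemma setIntegral_exp_neg_mul_sq_norm_div_le {E : Type*} [NormedAddCommGroup E]
    [MeasurableSpace E] (μ : Measure E) {S : Set E} {a c s : ℝ} (hS : μ S < ⊤)
    (hSa : ∀ y ∈ S, a ≤ ‖y‖) (ha : 0 ≤ a) (hc : 0 ≤ c) (hs : 0 ≤ s) :
    ∫ y in S, exp (-c * ‖y‖ ^ 2 / s) ∂μ ≤ exp (-c * a ^ 2 / s) * μ.real S := by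
  refine (Real.le_norm_self _).trans (norm_setIntegral_le_of_norm_le_const hS fun y hy => ?_)
  rw [norm_of_nonneg (exp_pos _).le, exp_le_exp, neg_mul, neg_div, neg_mul, neg_div,
    neg_le_neg_iff]
  have := hSa y hy
  gcongr

lemma measureReal_le_of_subset_closedBall {E : Type*} [NormedAddCommGroup E] [NormedSpace ℝ E]
    [MeasurableSpace E] [BorelSpace E] [FiniteDimensional ℝ E] (μ : Measure E)
    [μ.IsAddHaarMeasure] {S : Set E} {r : ℝ} (hr : 0 ≤ r) (hS : S ⊆ closedBall 0 r) :
    μ.real S ≤ r ^ finrank ℝ E * μ.real (ball 0 1) :=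
  Measure.addHaar_real_closedBall μ 0 hr ▸ measureReal_mono hS measure_closedBall_lt_top.ne

lemma rpow_neg_mul_setIntegral_annulus_le (n k : ℕ) {a b c s t : ℝ} (hc : 0 < c) (ha : 0 ≤ a)
    (hbk : b ≤ k * a) (hs : 0 < s) (hst : s ≤ t) :
    s ^ (-(n : ℝ) / 2) *
        ∫ y in {y : EuclideanSpace ℝ (Fin n) | a < ‖y‖ ∧ ‖y‖ < b}, exp (-c * ‖y‖ ^ 2 / s) ≤
      k ^ n * volume.real (ball (0 : EuclideanSpace ℝ (Fin n)) 1) *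
        (((n : ℝ) / c) ^ ((n : ℝ) / 2) * exp (-((n : ℝ) / 2))) *
        exp (-c * a ^ 2 / (2 * t)) := by
  set A := {y : EuclideanSpace ℝ (Fin n) | a < ‖y‖ ∧ ‖y‖ < b}
  have hA : A ⊆ closedBall 0 (k * a) := fun y hy => mem_closedBall_zero_iff.2 (hy.2.le.trans hbk)
  have hvol := measureReal_le_of_subset_closedBall volume (by positivity) hA
  rw [finrank_euclideanSpace_fin, mul_pow] at hvol
  have hint := setIntegral_exp_neg_mul_sq_norm_div_le volume
    ((measure_mono hA).trans_lt measure_closedBall_lt_top) (fun y hy => hy.1.le) ha hc.le hs.le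
  calc s ^ (-(n : ℝ) / 2) * ∫ y in A, exp (-c * ‖y‖ ^ 2 / s)
      ≤ s ^ (-(n : ℝ) / 2) * (exp (-c * a ^ 2 / s) *
          (k ^ n * a ^ n * volume.real (ball (0 : EuclideanSpace ℝ (Fin n)) 1))) := by
        gcongr
        exact hint.trans (by gcongr)
    _ = k ^ n * volume.real (ball (0 : EuclideanSpace ℝ (Fin n)) 1) *
          (s ^ (-(n : ℝ) / 2) * a ^ n * exp (-c * a ^ 2 / s)) := by ring
    _ ≤ k ^ n * volume.real (ball (0 : EuclideanSpace ℝ (Fin n)) 1) *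
          (((n : ℝ) / c) ^ ((n : ℝ) / 2) * exp (-((n : ℝ) / 2)) * exp (-c * a ^ 2 / (2 * t))) :=
        mul_le_mul_of_nonneg_left (rpow_neg_mul_pow_mul_exp_le n hc ha hs hst) (by positivity)
    _ = _ := by ring

theorem stmt2_general (n k : ℕ) (hk : 0 < k) (c : ℝ) (hc : 0 < c) :
    ∃ c₃ > (0:ℝ), ∀ a b t : ℝ, 0 < a → a < b → b ≤ (k : ℝ) * a → 0 < t →
      (∫ s in Set.Ioo (0:ℝ) t, s ^ (-(n : ℝ) / 2) *
          ∫ y in {y : EuclideanSpace ℝ (Fin n) | a < ‖y‖ ∧ ‖y‖ < b},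
            Real.exp (-c * ‖y‖ ^ 2 / s))
        ≤ c₃ * t * Real.exp (-c * a ^ 2 / (2 * t)) := by
  have hV : 0 < volume.real (ball (0 : EuclideanSpace ℝ (Fin n)) 1) :=
    ENNReal.toReal_pos (measure_ball_pos volume _ one_pos).ne' measure_ball_lt_top.ne
  have hK : 0 < ((n : ℝ) / c) ^ ((n : ℝ) / 2) := by
    rcases n.eq_zero_or_pos with rfl | _
    · simp
    · positivity
  refine ⟨k ^ n * volume.real (ball (0 : EuclideanSpace ℝ (Fin n)) 1) *
      (((n : ℝ) / c) ^ ((n : ℝ) / 2) * exp (-((n : ℝ) / 2))), by positivity,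
    fun a b t ha _ hbk ht => ?_⟩
  calc _ ≤ ‖∫ s in Set.Ioo (0:ℝ) t, s ^ (-(n : ℝ) / 2) *
          ∫ y in {y : EuclideanSpace ℝ (Fin n) | a < ‖y‖ ∧ ‖y‖ < b},
            exp (-c * ‖y‖ ^ 2 / s)‖ := Real.le_norm_self _
    _ ≤ _ * volume.real (Set.Ioo 0 t) :=
        norm_setIntegral_le_of_norm_le_const measure_Ioo_lt_top fun s ⟨hs, hst⟩ => by
          rw [norm_of_nonneg (mul_nonneg (by positivity) (integral_nonneg fun _ => (exp_pos _).le))]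
          exact rpow_neg_mul_setIntegral_annulus_le n k hc ha.le hbk hs hst.le
    _ = _ := by
        rw [volume_real_Ioo_of_le ht.le, sub_zero]
        ring

theorem stmt2 (n k : ℕ) (hn : 0 < n) (hk : 0 < k) (c : ℝ) (hc : 0 < c) :
    ∃ c₃ > (0:ℝ), ∀ a b t : ℝ, 0 < a → a < b → b ≤ (k : ℝ) * a → 0 < t →
      (∫ s in Set.Ioo (0:ℝ) t, s ^ (-(n : ℝ) / 2) *
          ∫ y in {y : EuclideanSpace ℝ (Fin n) | a < ‖y‖ ∧ ‖y‖ < b},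
            Real.exp (-c * ‖y‖ ^ 2 / s))
        ≤ c₃ * t * Real.exp (-c * a ^ 2 / (2 * t)) :=
  stmt2_general n k hk c hc
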